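/- An n-tuple (P_1,…,P_n) of elements of K⟨n⟩ is a cyclic gradient, i.e. there exists P ∈ K⟨n⟩ with δ_j P = P_j for all 1 ≤ j ≤ n, if and only if Σ_{j=1}^n X_j P_j lies in the cyclic subspace CK⟨n⟩. -/

import Mathlib

/-! Setup: the free associative algebra `K⟨X_1,…,X_n⟩` realized as the monoid
algebra of the free monoid on `Fin n`, together with the partial cyclic
derivatives `δ_j`, the number operator `N` and the cyclic symmetrization `C`. -/

noncomputable section

/-- `K⟨n⟩`, the ring of polynomials in `n` noncommuting indeterminates. -/
abbrev FreePoly (K : Type) [CommSemiring K] (n : ℕ) : Type :=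
  MonoidAlgebra K (FreeMonoid (Fin n))

/-- The monomial `X_{i_1} ⋯ X_{i_p}` associated to the word `w = [i_1,…,i_p]`. -/
def mono (K : Type) [Field K] {n : ℕ} (w : List (Fin n)) : FreePoly K n :=
  MonoidAlgebra.single (FreeMonoid.ofList w) 1

/-- The indeterminate `X k`. -/
def Xvar (K : Type) [Field K] {n : ℕ} (k : Fin n) : FreePoly K n := mono K [k]

variable {K : Type} [Field K] [CharZero K] {n : ℕ}

/-- The partial cyclic derivative `δ_j = μ̃ ∘ ∂_j`: on a monomial
`X_{i_0} ⋯ X_{i_s}` it gives `∑_{p : i_p = j} X_{i_{p+1}} ⋯ X_{i_s} X_{i_0} ⋯ X_{i_{p-1}}`. -/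
def cycDeriv (j : Fin n) : FreePoly K n →ₗ[K] FreePoly K n :=
  (Finsupp.lsum K fun w => LinearMap.toSpanSingleton K _
    (∑ p : Fin (FreeMonoid.toList w).length,
      if (FreeMonoid.toList w).get p = j then
        mono K ((FreeMonoid.toList w).drop (p + 1) ++ (FreeMonoid.toList w).take p)
      else 0)) ∘ₗ (MonoidAlgebra.coeffLinearEquiv K).toLinearMap

/-- The number operator `N`, multiplying a monomial by its degree. -/
def numOp : FreePoly K n →ₗ[K] FreePoly K n :=
  (Finsupp.lsum K fun w => LinearMap.toSpanSingleton K _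
    ((FreeMonoid.toList w).length • mono K (FreeMonoid.toList w))) ∘ₗ
    (MonoidAlgebra.coeffLinearEquiv K).toLinearMap

/-- The cyclic symmetrization `C`, sending a monomial of degree `p ≥ 1` to the
sum of its `p` cyclic rotations (and `1` to `0`). -/
def cycSym : FreePoly K n →ₗ[K] FreePoly K n :=
  (Finsupp.lsum K fun w => LinearMap.toSpanSingleton K _
    (∑ p ∈ Finset.range (FreeMonoid.toList w).length,
      mono K ((FreeMonoid.toList w).rotate (p + 1)))) ∘ₗ
    (MonoidAlgebra.coeffLinearEquiv K).toLinearMap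

/-!
Write `L_j` for the left derivative, which strips a leading `X_j` from a monomial and kills
the monomials not starting with `X_j`. The rotations of a monomial `w` are
`X_{w_p} (w_{p+1} ⋯ w_{p-1})`, so removing the first letter of each rotation produces exactly
the terms of the cyclic derivatives. This gives the Euler-type identity
`∑_j X_j δ_j Q = C Q`, which is one direction, and `L_j ∘ C = δ_j`. Conversely, if
`∑_k X_k P_k = C R`, applying `L_j` gives `δ_j R = L_j (∑_k X_k P_k) = P_j`, so `R` itself is
a potential; no division by degrees is needed.
-/

section

omit [CharZero K]

def leftDerivWord (K : Type) [Field K] {n : ℕ} (j : Fin n) : List (Fin n) → FreePoly K n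
  | [] => 0
  | k :: t => if k = j then mono K t else 0

def leftDeriv (j : Fin n) : FreePoly K n →ₗ[K] FreePoly K n :=
  (Finsupp.lsum K fun w => LinearMap.toSpanSingleton K _ (leftDerivWord K j (FreeMonoid.toList w))) ∘ₗ
    (MonoidAlgebra.coeffLinearEquiv K).toLinearMap

theorem Finset.sum_range_succ_eq_of_eq {M : Type*} [AddCommMonoid M] (f : ℕ → M) {m : ℕ}
    (h : f m = f 0) : ∑ p ∈ Finset.range m, f (p + 1) = ∑ p ∈ Finset.range m, f p := by
  cases m with
  | zero => simp
  | succ k => rw [Finset.sum_range_succ, h, ← Finset.sum_range_succ']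

theorem List.rotate_eq_getElem_cons {α : Type*} (w : List α) (p : Fin w.length) :
    w.rotate p = w[p] :: (w.drop (p + 1) ++ w.take p) := by
  rw [List.rotate_eq_drop_append_take p.isLt.le, List.drop_eq_getElem_cons p.isLt,
    List.cons_append]
  rfl

theorem FreePoly.lhom_ext_mono {N : Type} [AddCommMonoid N] [Module K N]
    ⦃φ ψ : FreePoly K n →ₗ[K] N⦄ (h : ∀ w : List (Fin n), φ (mono K w) = ψ (mono K w)) :
    φ = ψ :=
  MonoidAlgebra.lhom_ext' fun a => LinearMap.ext_ring (h (FreeMonoid.toList a))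

theorem mono_mul (u v : List (Fin n)) : mono K u * mono K v = mono K (u ++ v) := by
  simp [mono, MonoidAlgebra.single_mul_single]

theorem Xvar_mul_mono (k : Fin n) (w : List (Fin n)) : Xvar K k * mono K w = mono K (k :: w) :=
  mono_mul [k] w

theorem cycDeriv_mono (j : Fin n) (w : List (Fin n)) :
    cycDeriv j (mono K w) = ∑ p : Fin w.length,
      if w[p] = j then mono K (w.drop (p + 1) ++ w.take p) else 0 := by
  simp only [cycDeriv, mono, LinearMap.coe_comp, Function.comp_apply, LinearEquiv.coe_coe,
    MonoidAlgebra.coeffLinearEquiv_apply, MonoidAlgebra.coeff_single, Finsupp.coe_lsum,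
    Finsupp.sum_single_index, LinearMap.toSpanSingleton_apply, zero_smul, one_smul,
    FreeMonoid.toList_ofList, List.get_eq_getElem, Fin.getElem_fin]
  rfl

theorem cycSym_mono (w : List (Fin n)) :
    cycSym (mono K w) = ∑ p : Fin w.length, mono K (w.rotate p) := by
  rw [Fin.sum_univ_eq_sum_range (fun p => mono K (w.rotate p)),
    ← Finset.sum_range_succ_eq_of_eq _ (by rw [List.rotate_length, List.rotate_zero])]
  simp [cycSym, mono, MonoidAlgebra.coeff_single]

theorem leftDeriv_mono (j : Fin n) (w : List (Fin n)) :
    leftDeriv j (mono K w) = leftDerivWord K j w := by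
  simp [leftDeriv, mono, MonoidAlgebra.coeff_single]

theorem sum_Xvar_mul_cycDeriv (Q : FreePoly K n) :
    ∑ j : Fin n, Xvar K j * cycDeriv j Q = cycSym Q := by
  suffices h : ∑ j : Fin n, (LinearMap.mulLeft K (Xvar K j)).comp (cycDeriv j) = cycSym by
    simpa using LinearMap.congr_fun h Q
  refine FreePoly.lhom_ext_mono fun w => ?_
  simp only [LinearMap.sum_apply, LinearMap.comp_apply,
    LinearMap.mulLeft_apply, cycDeriv_mono, Finset.mul_sum, mul_ite, mul_zero, cycSym_mono]
  rw [Finset.sum_comm]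
  refine Finset.sum_congr rfl fun p _ => ?_
  rw [Finset.sum_ite_eq, if_pos (Finset.mem_univ _), Xvar_mul_mono,
    List.rotate_eq_getElem_cons]

theorem leftDeriv_cycSym (j : Fin n) (R : FreePoly K n) :
    leftDeriv j (cycSym R) = cycDeriv j R := by
  suffices h : (leftDeriv j).comp cycSym = cycDeriv j by
    simpa using LinearMap.congr_fun h R
  refine FreePoly.lhom_ext_mono fun w => ?_
  rw [LinearMap.comp_apply, cycSym_mono, map_sum, cycDeriv_mono]
  refine Finset.sum_congr rfl fun p _ => ?_
  rw [List.rotate_eq_getElem_cons, leftDeriv_mono, leftDerivWord]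

theorem leftDeriv_Xvar_mul (j k : Fin n) (F : FreePoly K n) :
    leftDeriv j (Xvar K k * F) = if k = j then F else 0 := by
  suffices h : (leftDeriv j).comp (LinearMap.mulLeft K (Xvar K k)) =
      if k = j then LinearMap.id else 0 by
    split_ifs at h ⊢ <;> simpa using LinearMap.congr_fun h F
  refine FreePoly.lhom_ext_mono fun w => ?_
  rw [LinearMap.comp_apply, LinearMap.mulLeft_apply, Xvar_mul_mono, leftDeriv_mono,
    leftDerivWord]
  split_ifs <;> rfl

theorem leftDeriv_sum_Xvar_mul (j : Fin n) (P : Fin n → FreePoly K n) :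
    leftDeriv j (∑ k : Fin n, Xvar K k * P k) = P j := by
  simp [leftDeriv_Xvar_mul]

end

theorem isCyclicGradient_iff_mem_cyclicSubspace (P : Fin n → FreePoly K n) :
    (∃ Q : FreePoly K n, ∀ j : Fin n, cycDeriv j Q = P j) ↔
      (∑ j : Fin n, Xvar K j * P j) ∈
        LinearMap.range (cycSym (K := K) (n := n)) := by
  constructor
  · rintro ⟨Q, hQ⟩
    exact ⟨Q, by simp only [← sum_Xvar_mul_cycDeriv Q, hQ]⟩
  · rintro ⟨R, hR⟩
    exact ⟨R, fun j => by rw [← leftDeriv_cycSym, hR, leftDeriv_sum_Xvar_mul]⟩
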